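/- Let G be a graph, S ⊆ V(G) an l-ECOC solution, and (I, J, R) an ECOC crown decomposition of G. Let 𝒞₂ be the set of components of G[I] adjacent to some vertex of J \ S, let 𝒞' be the set of components of G − S containing a vertex of J \ S, let T = V(𝒞') ∪ V(𝒞₂), and let D = V(𝒞') \ V(𝒞₂). Then S' = (S \ V(𝒞₂)) ∪ D is an l-ECOC solution satisfying |S'| ≤ |S|. -/

import Mathlib

open SimpleGraph

variable {V : Type*}

/-- Every connected component of `G.induce X` has exactly `l` vertices. -/
def AllCompsSize (G : SimpleGraph V) (X : Set V) (l : ℕ) : Prop :=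
  ∀ c : (G.induce X).ConnectedComponent, Nat.card c.supp = l

/-- `S` is an `l`-ECOC solution: every component of `G - S` has exactly `l` vertices. -/
def IsECOCSol (G : SimpleGraph V) (l : ℕ) (S : Set V) : Prop :=
  AllCompsSize G Sᶜ l

/-- The (open) neighborhood of a set `X`. -/
def nbhd (G : SimpleGraph V) (X : Set V) : Set V :=
  {v | v ∉ X ∧ ∃ u ∈ X, G.Adj u v}

/-- ECOC crown decomposition. -/
def IsECOCCrown (G : SimpleGraph V) (l : ℕ) (I J R : Set V) : Prop :=
  (I ∪ J ∪ R = Set.univ) ∧ Disjoint I J ∧ Disjoint I R ∧ Disjoint J R ∧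
  AllCompsSize G I l ∧
  (∀ u ∈ I, ∀ v ∈ R, ¬ G.Adj u v) ∧
  ∃ M : J → (G.induce I).ConnectedComponent, Function.Injective M ∧
    ∀ x : J, ∃ u ∈ (M x).supp, G.Adj (u : V) (x : V)

/-- Strict ECOC crown decomposition. -/
def IsStrictECOCCrown (G : SimpleGraph V) (l : ℕ) (I J R : Set V) : Prop :=
  IsECOCCrown G l I J R ∧ I.Nonempty ∧
  Nat.card J + 1 ≤ Nat.card ((G.induce I).ConnectedComponent)

/-- `u` and `v` lie in `X` and in the same connected component of `G.induce X`. -/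
def ReachIn (G : SimpleGraph V) (X : Set V) (u v : V) : Prop :=
  ∃ (hu : u ∈ X) (hv : v ∈ X), (G.induce X).Reachable ⟨u, hu⟩ ⟨v, hv⟩

/-- Feasibility for the LP relaxation WECOC-LP. -/
def LPFeasible (G : SimpleGraph V) (l : ℕ) (x : V → ℝ) : Prop :=
  (∀ v, 0 ≤ x v ∧ x v ≤ 1) ∧
  ∀ C : Finset V, (G.induce (C : Set V)).Connected → C.card = l + 1 →
    1 ≤ ∑ v ∈ C, x v

/-- Alternating path w.r.t. a subgraph `M`: a path whose edges at even positions
are outside `M` and at odd positions are inside `M`. -/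
def AltPath (G : SimpleGraph V) (M : G.Subgraph) {u v : V} (p : G.Walk u v) : Prop :=
  p.IsPath ∧ ∀ i : Fin p.edges.length, (p.edges.get i ∈ M.edgeSet ↔ Odd i.val)

/-!
Write `C₂ = V(𝒞₂)` and `C' = V(𝒞')`. Every vertex of `C₂` outside `S` lies in `C'`: its component
in `G - S` either meets `J \ S`, or avoids `J` and hence, as there are no `I`–`R` edges, stays in
`I`; having size `l` it is then its whole component of `G[I]`, which is adjacent to `J \ S`.
So `G - S'` splits, with no edges in between, into the components of `G[I]` in `𝒞₂` and the
components of `G - S` outside `𝒞'`, all of size `l`. For the size, injectivity of the crown map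
gives `|C'| ≤ l |J \ S| ≤ |C₂|`, hence `|C' \ C₂| ≤ |C₂ \ C'| ≤ |S ∩ C₂|`, which is what `S` loses.
-/

section Reach

variable {G : SimpleGraph V} {X Y : Set V} {u v w : V} {l : ℕ}

namespace ReachIn

lemma refl (hu : u ∈ X) : ReachIn G X u u :=
  ⟨hu, hu, .refl _⟩

lemma symm (h : ReachIn G X u v) : ReachIn G X v u :=
  let ⟨hu, hv, h⟩ := h
  ⟨hv, hu, h.symm⟩

lemma trans (huv : ReachIn G X u v) (hvw : ReachIn G X v w) : ReachIn G X u w :=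
  let ⟨hu, _, huv⟩ := huv
  let ⟨_, hw, hvw⟩ := hvw
  ⟨hu, hw, huv.trans hvw⟩

lemma of_adj (hu : u ∈ X) (hv : v ∈ X) (h : G.Adj u v) : ReachIn G X u v :=
  ⟨hu, hv, Adj.reachable (G := G.induce X) h⟩

lemma left_mem (h : ReachIn G X u v) : u ∈ X := h.1

lemma right_mem (h : ReachIn G X u v) : v ∈ X := h.2.1

lemma mono (hXY : X ⊆ Y) (h : ReachIn G X u v) : ReachIn G Y u v :=
  let ⟨hu, hv, h⟩ := h
  ⟨hXY hu, hXY hv, h.map (G.induceHomOfLE hXY).toHom⟩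

lemma restrict (hv : v ∈ Y)
    (hstep : ∀ a b, ReachIn G X v a → a ∈ Y → b ∈ X → G.Adj a b → b ∈ Y)
    (h : ReachIn G X v u) : ReachIn G Y v u := by
  obtain ⟨hvX, huX, ⟨p⟩⟩ := h
  suffices ∀ (a b : X) (_ : (G.induce X).Walk a b),
      ReachIn G X v a → ReachIn G Y v a → ReachIn G Y v b from
    this _ _ p (refl hvX) (refl hv)
  intro a b p
  induction p with
  | nil => exact fun _ h => h
  | @cons a c b hac _ ih =>
    intro hXa hYa
    have hcY : (c : V) ∈ Y := hstep a c hXa hYa.right_mem c.2 hac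
    exact ih (hXa.trans (of_adj a.2 c.2 hac)) (hYa.trans (of_adj hYa.right_mem hcY hac))

end ReachIn

lemma reachIn_comm : ReachIn G X u v ↔ ReachIn G X v u :=
  ⟨ReachIn.symm, ReachIn.symm⟩

lemma setOf_reachIn_eq_image_supp (hv : v ∈ X) :
    {u | ReachIn G X v u} = Subtype.val '' ((G.induce X).connectedComponentMk ⟨v, hv⟩).supp := by
  ext u
  constructor
  · rintro ⟨_, hu, h⟩
    exact ⟨⟨u, hu⟩, ConnectedComponent.eq.2 h.symm, rfl⟩
  · rintro ⟨⟨u, hu⟩, hmem, rfl⟩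
    exact ⟨hv, hu, (ConnectedComponent.eq.1 hmem).symm⟩

lemma allCompsSize_iff : AllCompsSize G X l ↔ ∀ v ∈ X, {u | ReachIn G X v u}.ncard = l := by
  simp_rw [AllCompsSize, ← Nat.card_coe_set_eq]
  constructor
  · intro h v hv
    rw [setOf_reachIn_eq_image_supp hv, Nat.card_image_of_injective Subtype.val_injective]
    exact h _
  · intro h c
    obtain ⟨⟨v, hv⟩, rfl⟩ := c.exists_rep
    rw [← h v hv, setOf_reachIn_eq_image_supp hv, Nat.card_image_of_injective Subtype.val_injective]
    rfl

end Reach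

def IsComponentUnion (G : SimpleGraph V) (X Y : Set V) : Prop :=
  Y ⊆ X ∧ ∀ a ∈ Y, ∀ b ∈ X, G.Adj a b → b ∈ Y

def componentsMeeting (G : SimpleGraph V) (X W : Set V) : Set V :=
  {v | ∃ w ∈ W, ReachIn G X v w}

section Components

variable {G : SimpleGraph V} {X Y Z W : Set V} {u v : V} {l : ℕ}

namespace IsComponentUnion

lemma reachIn_iff (h : IsComponentUnion G X Y) (hv : v ∈ Y) :
    ReachIn G X v u ↔ ReachIn G Y v u :=
  ⟨ReachIn.restrict hv fun _ _ _ ha hb hab => h.2 _ ha _ hb hab, ReachIn.mono h.1⟩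

lemma sdiff (h : IsComponentUnion G X Y) : IsComponentUnion G X (X \ Y) :=
  ⟨Set.sdiff_subset, fun a ha b hb hab => ⟨hb, fun hbY => ha.2 (h.2 b hbY a ha.1 hab.symm)⟩⟩

lemma allCompsSize (h : IsComponentUnion G X Y) (hX : AllCompsSize G X l) :
    AllCompsSize G Y l := by
  rw [allCompsSize_iff] at hX ⊢
  intro v hv
  simp_rw [← h.reachIn_iff hv]
  exact hX v (h.1 hv)

lemma allCompsSize_of_cover (hY : IsComponentUnion G X Y) (hZ : IsComponentUnion G X Z)
    (hXYZ : X ⊆ Y ∪ Z) (hYl : AllCompsSize G Y l) (hZl : AllCompsSize G Z l) :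
    AllCompsSize G X l := by
  rw [allCompsSize_iff] at hYl hZl ⊢
  intro v hv
  rcases hXYZ hv with hvY | hvZ
  · simp_rw [hY.reachIn_iff hvY]
    exact hYl v hvY
  · simp_rw [hZ.reachIn_iff hvZ]
    exact hZl v hvZ

end IsComponentUnion

lemma isComponentUnion_componentsMeeting : IsComponentUnion G X (componentsMeeting G X W) :=
  ⟨fun _ ⟨_, _, h⟩ => h.left_mem, fun _ ⟨w, hw, haw⟩ _ hb hab =>
    ⟨w, hw, (ReachIn.of_adj hb haw.left_mem hab.symm).trans haw⟩⟩

lemma componentsMeeting_subset : componentsMeeting G X W ⊆ X :=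
  isComponentUnion_componentsMeeting.1

lemma ncard_componentsMeeting_le [Finite V] (hX : AllCompsSize G X l) (W : Set V) :
    (componentsMeeting G X W).ncard ≤ l * W.ncard := by
  have hunion : componentsMeeting G X W = ⋃ w ∈ W.toFinite.toFinset, {u | ReachIn G X w u} := by
    ext v
    simp [componentsMeeting, reachIn_comm]
  have hcomp (w : V) : {u | ReachIn G X w u}.ncard ≤ l := by
    by_cases hw : w ∈ X
    · exact (allCompsSize_iff.1 hX w hw).le
    · simp [show {u | ReachIn G X w u} = ∅ from Set.eq_empty_of_forall_notMem
        fun u h => hw h.left_mem]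
  calc (componentsMeeting G X W).ncard
      ≤ ∑ w ∈ W.toFinite.toFinset, {u | ReachIn G X w u}.ncard :=
        hunion ▸ Finset.set_ncard_biUnion_le _ _
    _ ≤ W.toFinite.toFinset.card • l := Finset.sum_le_card_nsmul _ _ _ fun w _ => hcomp w
    _ = l * W.ncard := by rw [smul_eq_mul, mul_comm, Set.ncard_eq_toFinset_card W]

end Components

section Counting

variable {G : SimpleGraph V} {I J : Set V} {l : ℕ}

lemma ncard_biUnion_eq_mul {ι α : Type*} [Finite α] {t : Set ι} (ht : t.Finite) {s : ι → Set α}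
    (hs : ∀ i ∈ t, (s i).ncard = l) (hdisj : t.PairwiseDisjoint s) :
    (⋃ i ∈ t, s i).ncard = l * t.ncard := by
  rw [ht.ncard_biUnion (fun _ _ => Set.toFinite _) hdisj, finsum_mem_congr rfl hs,
    finsum_mem_eq_finite_toFinset_sum _ ht, Finset.sum_const, smul_eq_mul, mul_comm,
    Set.ncard_eq_toFinset_card t ht]

lemma mul_ncard_le_ncard_componentsMeeting [Finite V] (hI : AllCompsSize G I l)
    (M : J → (G.induce I).ConnectedComponent) (hM : Function.Injective M)
    (hMadj : ∀ x : J, ∃ u ∈ (M x).supp, G.Adj (u : V) x) {T : Set V} (hT : T ⊆ J) :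
    l * T.ncard ≤ (componentsMeeting G I {u | ∃ w ∈ T, G.Adj u w}).ncard := by
  set t : Set J := Subtype.val ⁻¹' T
  have hdisj : t.PairwiseDisjoint fun x => Subtype.val '' (M x).supp := fun x _ y _ hxy =>
    Set.disjoint_image_of_injective Subtype.val_injective
      (pairwise_disjoint_supp_connectedComponent _ (hM.ne hxy))
  have hsub : (⋃ x ∈ t, Subtype.val '' (M x).supp) ⊆
      componentsMeeting G I {u | ∃ w ∈ T, G.Adj u w} := by
    simp only [Set.iUnion_subset_iff]
    rintro x hx _ ⟨u, hu, rfl⟩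
    obtain ⟨u', hu', hadj⟩ := hMadj x
    exact ⟨u', ⟨x, hx, hadj⟩, u.2, u'.2, ConnectedComponent.eq.1 (hu.trans hu'.symm)⟩
  have htT : t.ncard = T.ncard := by
    rw [Set.ncard_preimage_of_injective_subset_range Subtype.val_injective (by simpa using hT)]
  calc l * T.ncard = (⋃ x ∈ t, Subtype.val '' (M x).supp).ncard := by
        rw [ncard_biUnion_eq_mul t.toFinite (fun x _ => ?_) hdisj, htT]
        rw [Set.ncard_image_of_injective _ Subtype.val_injective, ← Nat.card_coe_set_eq]
        exact hI (M x)
    _ ≤ _ := Set.ncard_le_ncard hsub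

end Counting

lemma Set.ncard_sdiff_union_sdiff_le {α : Type*} [Finite α] {S P Q : Set α} (hQS : Disjoint Q S)
    (hPQ : P \ S ⊆ Q) (hcard : Q.ncard ≤ P.ncard) : ((S \ P) ∪ (Q \ P)).ncard ≤ S.ncard := by
  have hPQS : P \ Q ⊆ S ∩ P := fun x ⟨hxP, hxQ⟩ =>
    ⟨by_contra fun hxS => hxQ (hPQ ⟨hxP, hxS⟩), hxP⟩
  calc ((S \ P) ∪ (Q \ P)).ncard = (S \ P).ncard + (Q \ P).ncard :=
        Set.ncard_union_eq (hQS.mono Set.sdiff_subset Set.sdiff_subset).symm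
    _ ≤ (S \ P).ncard + (P \ Q).ncard := Nat.add_le_add_left
        ((Set.ncard_le_ncard_iff_ncard_sdiff_le_ncard_sdiff (Set.toFinite _) (Set.toFinite _)).1
          hcard) _
    _ ≤ (S \ P).ncard + (S ∩ P).ncard := Nat.add_le_add_left (Set.ncard_le_ncard hPQS) _
    _ = S.ncard := by rw [add_comm, Set.ncard_inter_add_ncard_sdiff_eq_ncard]

namespace IsECOCCrown

variable {G : SimpleGraph V} {l : ℕ} {S I J R : Set V}

lemma isComponentUnion (hcrown : IsECOCCrown G l I J R) {Y B : Set V}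
    (hY : IsComponentUnion G I Y) (hYB : Y ⊆ B) (hBJ : Disjoint B J) : IsComponentUnion G B Y := by
  obtain ⟨hcover, -, -, -, -, hIR, -⟩ := hcrown
  refine ⟨hYB, fun a ha b hb hab => ?_⟩
  rcases hcover ▸ Set.mem_univ b with (hbI | hbJ) | hbR
  · exact hY.2 a ha b hbI hab
  · exact absurd hbJ (hBJ.notMem_of_mem_left hb)
  · exact absurd hab (hIR a (hY.1 ha) b hbR)

lemma sdiff_subset_componentsMeeting [Finite V] (hcrown : IsECOCCrown G l I J R)
    (hS : IsECOCSol G l S) :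
    componentsMeeting G I {u | ∃ w ∈ J \ S, G.Adj u w} \ S ⊆ componentsMeeting G Sᶜ (J \ S) := by
  rintro v ⟨⟨u, ⟨w, hw, huw⟩, hvu⟩, hvS⟩
  by_contra hv
  obtain ⟨hcover, -, -, -, hI, hIR, -⟩ := hcrown
  have hsub : {x | ReachIn G Sᶜ v x} ⊆ {x | ReachIn G I v x} := fun x hx => by
    refine ReachIn.restrict hvu.left_mem (fun a b hva haI hbS hab => ?_) hx
    rcases hcover ▸ Set.mem_univ b with (hbI | hbJ) | hbR
    · exact hbI
    · exact absurd ⟨b, ⟨hbJ, hbS⟩, hva.trans (ReachIn.of_adj hva.right_mem hbS hab)⟩ hv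
    · exact absurd hab (hIR a haI b hbR)
  have heq : {x | ReachIn G Sᶜ v x} = {x | ReachIn G I v x} :=
    Set.eq_of_subset_of_ncard_le hsub
      (by rw [allCompsSize_iff.1 hS v hvS, allCompsSize_iff.1 hI v hvu.left_mem])
  have hvu' : ReachIn G Sᶜ v u := (Set.ext_iff.1 heq u).2 hvu
  exact hv ⟨w, hw, hvu'.trans (ReachIn.of_adj hvu'.right_mem hw.2 huw)⟩

lemma isECOCSol_exchange [Finite V] (hcrown : IsECOCCrown G l I J R) (hS : IsECOCSol G l S) :
    IsECOCSol G l
      ((S \ componentsMeeting G I {u | ∃ w ∈ J \ S, G.Adj u w}) ∪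
        (componentsMeeting G Sᶜ (J \ S) \ componentsMeeting G I {u | ∃ w ∈ J \ S, G.Adj u w})) := by
  obtain ⟨-, hIJ, -, -, hI, -⟩ := id hcrown
  have hD := hcrown.sdiff_subset_componentsMeeting hS
  set C₂ := componentsMeeting G I {u | ∃ w ∈ J \ S, G.Adj u w}
  set C' := componentsMeeting G Sᶜ (J \ S)
  have hJ : Disjoint ((S \ C₂) ∪ (C' \ C₂))ᶜ J := by
    refine Set.disjoint_left.2 fun x hxA hxJ => hxA ?_
    have hxC₂ : x ∉ C₂ := fun hx => hIJ.notMem_of_mem_left (componentsMeeting_subset hx) hxJ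
    by_cases hxS : x ∈ S
    · exact .inl ⟨hxS, hxC₂⟩
    · exact .inr ⟨⟨x, ⟨hxJ, hxS⟩, ReachIn.refl hxS⟩, hxC₂⟩
  have hC₂ : IsComponentUnion G ((S \ C₂) ∪ (C' \ C₂))ᶜ C₂ :=
    hcrown.isComponentUnion isComponentUnion_componentsMeeting
      (fun v hv hA => hA.elim (fun h => h.2 hv) (fun h => h.2 hv)) hJ
  have hrest : ((S \ C₂) ∪ (C' \ C₂))ᶜ \ C₂ = Sᶜ \ C' := by
    ext v
    constructor
    · rintro ⟨hvA, hv₂⟩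
      exact ⟨fun hvS => hvA (.inl ⟨hvS, hv₂⟩), fun hv' => hvA (.inr ⟨hv', hv₂⟩)⟩
    · rintro ⟨hvS, hv'⟩
      refine ⟨?_, fun hv₂ => hv' (hD ⟨hv₂, hvS⟩)⟩
      rintro (⟨hvS', -⟩ | ⟨hv'', -⟩)
      exacts [hvS hvS', hv' hv'']
  refine hC₂.allCompsSize_of_cover hC₂.sdiff
    (fun v hv => (em (v ∈ C₂)).elim .inl fun hv₂ => .inr ⟨hv, hv₂⟩)
    (isComponentUnion_componentsMeeting.allCompsSize hI) ?_
  rw [hrest]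
  exact isComponentUnion_componentsMeeting.sdiff.allCompsSize hS

lemma ncard_exchange_le [Finite V] (hcrown : IsECOCCrown G l I J R) (hS : IsECOCSol G l S) :
    ((S \ componentsMeeting G I {u | ∃ w ∈ J \ S, G.Adj u w}) ∪
        (componentsMeeting G Sᶜ (J \ S) \ componentsMeeting G I {u | ∃ w ∈ J \ S, G.Adj u w})).ncard
      ≤ S.ncard := by
  obtain ⟨-, -, -, -, hI, -, M, hM, hMadj⟩ := id hcrown
  exact Set.ncard_sdiff_union_sdiff_le
    (Set.subset_compl_iff_disjoint_right.1 componentsMeeting_subset)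
    (hcrown.sdiff_subset_componentsMeeting hS)
    ((ncard_componentsMeeting_le hS _).trans
      (mul_ncard_le_ncard_componentsMeeting hI M hM hMadj Set.sdiff_subset))

end IsECOCCrown

theorem stmt7_general [Fintype V] (G : SimpleGraph V) (l : ℕ)
    (S : Set V) (hS : IsECOCSol G l S)
    (I J R : Set V) (hcrown : IsECOCCrown G l I J R)
    (VC2 : Set V) (hVC2 : VC2 = {v | ∃ u w, ReachIn G I v u ∧ G.Adj u w ∧ w ∈ J \ S})
    (VC' : Set V) (hVC' : VC' = {v | ∃ w ∈ J \ S, ReachIn G Sᶜ v w}) :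
    IsECOCSol G l ((S \ VC2) ∪ (VC' \ VC2)) ∧
    Nat.card ((S \ VC2) ∪ (VC' \ VC2) : Set V) ≤ Nat.card S := by
  have hC₂ : VC2 = componentsMeeting G I {u | ∃ w ∈ J \ S, G.Adj u w} := by
    rw [hVC2]
    ext v
    exact ⟨fun ⟨u, w, hvu, huw, hw⟩ => ⟨u, ⟨w, hw, huw⟩, hvu⟩,
      fun ⟨u, ⟨w, hw, huw⟩, hvu⟩ => ⟨u, w, hvu, huw, hw⟩⟩
  subst hC₂ hVC'
  rw [Nat.card_coe_set_eq, Nat.card_coe_set_eq]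
  exact ⟨hcrown.isECOCSol_exchange hS, hcrown.ncard_exchange_le hS⟩

theorem stmt7 [Fintype V] (G : SimpleGraph V) (l : ℕ) (hl : 1 ≤ l)
    (S : Set V) (hS : IsECOCSol G l S)
    (I J R : Set V) (hcrown : IsECOCCrown G l I J R)
    (VC2 : Set V) (hVC2 : VC2 = {v | ∃ u w, ReachIn G I v u ∧ G.Adj u w ∧ w ∈ J \ S})
    (VC' : Set V) (hVC' : VC' = {v | ∃ w ∈ J \ S, ReachIn G Sᶜ v w}) :
    IsECOCSol G l ((S \ VC2) ∪ (VC' \ VC2)) ∧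
    Nat.card ((S \ VC2) ∪ (VC' \ VC2) : Set V) ≤ Nat.card S :=
  stmt7_general G l S hS I J R hcrown VC2 hVC2 VC' hVC'
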